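/- arXiv:2411.16492 — 2 statements merged into one kernel-verified Lean document; each statement's English description precedes it below -/
import Mathlib

section
/- For all integers m ≥ 0 and k ≥ 0, R_W(m,k) = ∑_{j=0}^{k} C(⌈m/2⌉, j) · S(m−j, m−k). -/
/-!
In the coordinates `u = (i + j) / 2`, `v = (i - j) / 2` the white squares form the board
`|v| < u ≤ m - |v|`, on which bishops move like rooks; its columns are nested intervals of rows.
Deleting a column of height `h` that meets every row of a board changes its rook numbers by
`r_{k+1}(B) = r_{k+1}(B') + (h - k) r_k(B')`. Deleting the columns `v = 0` and `v = 1` (heights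
`m + 2` and `m`) from the board of size `m + 2` leaves the board of size `m`, and the closed form
satisfies the same two-step recursion, by Pascal's rule for `C(⌈m/2⌉ + 1, j)` together with the
recurrence of the Stirling numbers.
-/

open Finset

/-- Stirling number of the second kind `S(n,l)`. -/
def stirling2 : ℕ → ℕ → ℕ
  | 0, 0 => 1
  | 0, _ + 1 => 0
  | _ + 1, 0 => 0
  | n + 1, l + 1 => (l + 1) * stirling2 n (l + 1) + stirling2 n l

/-- Stirling number of the second kind with integer lower argument, extended by
`S(n,l) = 0` whenever `l < 0`. -/
def stirlingZ (n : ℕ) (l : ℤ) : ℕ := if 0 ≤ l then stirling2 n l.toNat else 0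

/-- `whiteCount m k` is the number of `k`-element subsets `P` of the white squares
`{(i,j) ∈ {1,…,m} × {1,…,m} : i+j even}` such that any two distinct elements `(i,j)`
and `(i',j')` of `P` satisfy `i+j ≠ i'+j'` and `i−j ≠ i'−j'` (nonattacking bishops on
the white squares of the `m × m` board). -/
def whiteCount (m k : ℕ) : ℕ :=
  ((((Finset.Icc 1 m ×ˢ Finset.Icc 1 m).filter (fun a => Even (a.1 + a.2))).powersetCard
      k).filter
    (fun P => ∀ a ∈ P, ∀ b ∈ P, a ≠ b →
      a.1 + a.2 ≠ b.1 + b.2 ∧ (a.1 : ℤ) - a.2 ≠ (b.1 : ℤ) - b.2)).card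

theorem stirling2_eq_stirlingSecond : stirling2 = Nat.stirlingSecond := by
  funext n l
  induction n generalizing l with
  | zero => cases l <;> rfl
  | succ n ih => cases l <;> simp [stirling2, Nat.stirlingSecond_succ_succ, ih]

theorem stirlingZ_of_neg (n : ℕ) {l : ℤ} (hl : l < 0) : stirlingZ n l = 0 := by
  simp [stirlingZ, hl.not_ge]

theorem stirlingZ_of_lt {n : ℕ} {l : ℤ} (hl : n < l) : stirlingZ n l = 0 := by
  rw [stirlingZ, if_pos (by omega), stirling2_eq_stirlingSecond,
    Nat.stirlingSecond_eq_zero_of_lt (by omega)]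

theorem stirlingZ_natCast (n l : ℕ) : stirlingZ n l = Nat.stirlingSecond n l := by
  simp [stirlingZ, stirling2_eq_stirlingSecond]

theorem stirlingZ_succ (n : ℕ) (z : ℤ) :
    (stirlingZ (n + 1) z : ℤ) = z * stirlingZ n z + stirlingZ n (z - 1) := by
  rcases lt_trichotomy z 0 with hz | rfl | hz
  · simp [stirlingZ_of_neg, hz, show z - 1 < 0 by omega]
  · simp [stirlingZ, stirling2_eq_stirlingSecond]
  · obtain ⟨l, rfl⟩ : ∃ l : ℕ, z = (l + 1 : ℕ) := ⟨(z - 1).toNat, by omega⟩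
    rw [Nat.cast_succ, add_sub_cancel_right, ← Nat.cast_succ]
    simp only [stirlingZ_natCast, Nat.stirlingSecond_succ_succ]
    push_cast
    ring

theorem stirlingZ_add_two_add_stirlingZ_add_one (n : ℕ) (z : ℤ) :
    (stirlingZ (n + 2) z + stirlingZ (n + 1) z : ℤ) =
      stirlingZ n (z - 2) + 2 * z * stirlingZ n (z - 1) + z * (z + 1) * stirlingZ n z := by
  have h₁ := stirlingZ_succ (n + 1) z
  have h₂ := stirlingZ_succ n z
  have h₃ := stirlingZ_succ n (z - 1)
  rw [show z - 1 - 1 = z - 2 by ring] at h₃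
  linear_combination h₁ + (z + 1) * h₂ + h₃

/-- The right-hand side of the theorem at `k` is `whiteClosedForm m (m - k)`: the terms with
`j > k` vanish, so the sum can run up to `⌈m/2⌉` instead. -/
def whiteClosedForm (m : ℕ) (l : ℤ) : ℤ :=
  ∑ j ∈ range ((m + 1) / 2 + 1), (((m + 1) / 2).choose j : ℤ) * stirlingZ (m - j) l

theorem whiteClosedForm_of_lt {m : ℕ} {l : ℤ} (hl : m < l) : whiteClosedForm m l = 0 :=
  sum_eq_zero fun j _ => by rw [stirlingZ_of_lt (by omega), Nat.cast_zero, mul_zero]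

theorem whiteClosedForm_of_neg {m : ℕ} {l : ℤ} (hl : l < 0) : whiteClosedForm m l = 0 :=
  sum_eq_zero fun j _ => by rw [stirlingZ_of_neg _ hl, Nat.cast_zero, mul_zero]

theorem whiteClosedForm_add_two (m : ℕ) (z : ℤ) :
    whiteClosedForm (m + 2) z = whiteClosedForm m (z - 2) + 2 * z * whiteClosedForm m (z - 1) +
      z * (z + 1) * whiteClosedForm m z := by
  set c := (m + 1) / 2
  have hc : (m + 2 + 1) / 2 = c + 1 := by omega
  have pascal := sum_choose_succ_mul (R := ℤ) (fun i _ => (stirlingZ (m + 2 - i) z : ℤ)) c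
  rw [whiteClosedForm, hc, pascal, ← sum_add_distrib]
  simp only [whiteClosedForm, mul_sum, ← sum_add_distrib]
  refine sum_congr rfl fun j hj => ?_
  have hj : j ≤ m := by rw [mem_range] at hj; omega
  rw [show m + 2 - j = m - j + 2 by omega, show m + 2 - (j + 1) = m - j + 1 by omega]
  linear_combination (c.choose j : ℤ) * stirlingZ_add_two_add_stirlingZ_add_one (m - j) z

theorem cast_sum_eq_whiteClosedForm (m k : ℕ) :
    ((∑ j ∈ range (k + 1), ((m + 1) / 2).choose j * stirlingZ (m - j) ((m : ℤ) - k) : ℕ) : ℤ) =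
      whiteClosedForm m (m - k) := by
  set c := (m + 1) / 2
  push_cast
  rw [whiteClosedForm]
  rcases le_total k c with h | h
  · refine sum_subset (range_subset_range.mpr (by omega)) fun j hj hjk => ?_
    simp only [mem_range] at hj hjk
    rw [stirlingZ_of_lt (by omega), Nat.cast_zero, mul_zero]
  · refine (sum_subset (range_subset_range.mpr (by omega)) fun j hj hjc => ?_).symm
    simp only [mem_range] at hj hjc
    rw [Nat.choose_eq_zero_of_lt (by omega), Nat.cast_zero, zero_mul]

/-- Rook numbers after adjoining a column of height `h` that meets every row of the board. -/
def addColumn (h : ℤ) (r : ℕ → ℤ) : ℕ → ℤ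
  | 0 => r 0
  | k + 1 => r (k + 1) + (h - k) * r k

theorem whiteClosedForm_add_two_eq_addColumn (m : ℕ) :
    (fun k : ℕ => whiteClosedForm (m + 2) ((m + 2 : ℕ) - k)) =
      addColumn (m + 2) (addColumn m fun k => whiteClosedForm m (m - k)) := by
  funext k
  rcases k with _ | _ | k <;>
    simp only [addColumn, whiteClosedForm_add_two, Nat.cast_add, Nat.cast_ofNat, Nat.cast_zero,
      Nat.cast_one] <;>
    ring_nf
  · rw [whiteClosedForm_of_lt (by omega : (m : ℤ) < 1 + m),
      whiteClosedForm_of_lt (by omega : (m : ℤ) < 2 + m)]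
    ring
  · rw [whiteClosedForm_of_lt (by omega : (m : ℤ) < 1 + m)]
    ring

section PairwiseSubsets

variable {α β : Type*} [DecidableEq α] [DecidableEq β]

def pairwiseSubsets (r : α → α → Prop) [DecidableRel r] (s : Finset α) (k : ℕ) :
    Finset (Finset α) :=
  {P ∈ s.powersetCard k | ∀ a ∈ P, ∀ b ∈ P, a ≠ b → r a b}

theorem mem_pairwiseSubsets {r : α → α → Prop} [DecidableRel r] {s P : Finset α} {k : ℕ} :
    P ∈ pairwiseSubsets r s k ↔ P ⊆ s ∧ #P = k ∧ ∀ a ∈ P, ∀ b ∈ P, a ≠ b → r a b := by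
  rw [pairwiseSubsets, mem_filter, mem_powersetCard, and_assoc]

theorem card_pairwiseSubsets_eq_of_bijOn {r : α → α → Prop} {r' : β → β → Prop}
    [DecidableRel r] [DecidableRel r'] {s : Finset α} {t : Finset β} {f : α → β}
    (hf : Set.BijOn f s t)
    (hr : ∀ a ∈ s, ∀ b ∈ s, a ≠ b → (r a b ↔ r' (f a) (f b))) (k : ℕ) :
    #(pairwiseSubsets r s k) = #(pairwiseSubsets r' t k) := by
  have hinj {P : Finset α} (hP : P ⊆ s) : Set.InjOn f P := hf.injOn.mono hP
  refine card_nbij (image f) (fun P hP => ?_) (fun P hP Q hQ hPQ => ?_) (fun Q hQ => ?_)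
  · obtain ⟨hPs, rfl, hPr⟩ := mem_pairwiseSubsets.mp hP
    refine mem_pairwiseSubsets.mpr ⟨fun b hb => ?_, card_image_of_injOn (hinj hPs), ?_⟩
    · obtain ⟨a, ha, rfl⟩ := mem_image.mp hb
      exact hf.mapsTo (hPs ha)
    · simp only [mem_image]
      rintro _ ⟨a, ha, rfl⟩ _ ⟨b, hb, rfl⟩ hab
      have hab := ne_of_apply_ne f hab
      exact (hr a (hPs ha) b (hPs hb) hab).mp (hPr a ha b hb hab)
  · have hPs := (mem_pairwiseSubsets.mp hP).1
    have hQs := (mem_pairwiseSubsets.mp hQ).1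
    exact coe_injective <| (hf.injOn.image_eq_image_iff (coe_subset.mpr hPs)
      (coe_subset.mpr hQs)).mp (by simpa using congrArg ((↑) : Finset β → Set β) hPQ)
  · obtain ⟨hQt, rfl, hQr⟩ := mem_pairwiseSubsets.mp hQ
    have hst : s.image f = t := coe_injective (by simpa using hf.image_eq)
    obtain ⟨P, hPs, rfl⟩ := subset_image_iff.mp (hst ▸ hQt)
    refine ⟨P, mem_pairwiseSubsets.mpr ⟨hPs, (card_image_of_injOn (hinj hPs)).symm, ?_⟩, rfl⟩
    intro a ha b hb hab
    exact (hr a (hPs ha) b (hPs hb) hab).mpr <| hQr _ (mem_image_of_mem f ha) _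
      (mem_image_of_mem f hb) (hf.injOn.ne (hPs ha) (hPs hb) hab)

end PairwiseSubsets

section Rooks

variable {α β : Type*} [DecidableEq α] [DecidableEq β]

def rookPlacements (B : Finset (α × β)) (k : ℕ) : Finset (Finset (α × β)) :=
  pairwiseSubsets (fun a b => a.1 ≠ b.1 ∧ a.2 ≠ b.2) B k

def rookNumber (B : Finset (α × β)) (k : ℕ) : ℕ := #(rookPlacements B k)

theorem rookNumber_zero (B : Finset (α × β)) : rookNumber B 0 = 1 := by
  simp [rookNumber, rookPlacements, pairwiseSubsets, filter_singleton]

theorem rookNumber_eq_zero_of_card_lt {B : Finset (α × β)} {k : ℕ} (h : #B < k) :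
    rookNumber B k = 0 := by
  simp [rookNumber, rookPlacements, pairwiseSubsets, powersetCard_eq_empty.mpr h]

def freeCells (B : Finset (α × β)) (c : β) (P : Finset (α × β)) : Finset (α × β) :=
  {q ∈ B | q.2 = c ∧ q.1 ∉ P.image Prod.fst}

variable {B : Finset (α × β)} {c : β} {k : ℕ}

theorem filter_rookPlacements_avoiding :
    {P ∈ rookPlacements B k | ∀ p ∈ P, p.2 ≠ c} = rookPlacements {p ∈ B | p.2 ≠ c} k := by
  ext P
  simp only [mem_filter, rookPlacements, mem_pairwiseSubsets, subset_iff]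
  constructor
  · rintro ⟨⟨hPB, hk, hP⟩, hc⟩
    exact ⟨fun p hp => ⟨hPB hp, hc p hp⟩, hk, hP⟩
  · rintro ⟨hPB, hk, hP⟩
    exact ⟨⟨fun p hp => (hPB hp).1, hk, hP⟩, fun p hp => (hPB hp).2⟩

theorem card_freeCells_add (hcol : ∀ p ∈ B, (p.1, c) ∈ B) {P : Finset (α × β)}
    (hP : P ∈ rookPlacements {p ∈ B | p.2 ≠ c} k) :
    #(freeCells B c P) + k = #{q ∈ B | q.2 = c} := by
  obtain ⟨hPB, rfl, hPr⟩ := mem_pairwiseSubsets.mp hP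
  have hblocked :
      {q ∈ {q ∈ B | q.2 = c} | q.1 ∈ P.image Prod.fst} = P.image fun p => (p.1, c) := by
    ext q
    simp only [mem_filter, mem_image]
    constructor
    · rintro ⟨⟨-, hqc⟩, p, hp, hpq⟩
      exact ⟨p, hp, Prod.ext hpq hqc.symm⟩
    · rintro ⟨p, hp, rfl⟩
      exact ⟨⟨hcol p (mem_filter.mp (hPB hp)).1, rfl⟩, p, hp, rfl⟩
  have hinj : Set.InjOn (fun p : α × β => (p.1, c)) P := fun a ha b hb hab => by
    by_contra hne
    exact (hPr a ha b hb hne).1 (by simpa using hab)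
  rw [← card_filter_add_card_filter_not (s := {q ∈ B | q.2 = c})
    (fun q => q.1 ∈ P.image Prod.fst), hblocked, card_image_of_injOn hinj, freeCells,
    filter_filter, add_comm]

theorem notMem_of_mem_rookPlacements_filter_ne {P : Finset (α × β)} {q : α × β}
    (hP : P ∈ rookPlacements {p ∈ B | p.2 ≠ c} k) (hqc : q.2 = c) : q ∉ P :=
  fun hqP => (mem_filter.mp ((mem_pairwiseSubsets.mp hP).1 hqP)).2 hqc

theorem insert_mem_rookPlacements {P : Finset (α × β)} {q : α × β}
    (hP : P ∈ rookPlacements {p ∈ B | p.2 ≠ c} k) (hq : q ∈ freeCells B c P) :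
    insert q P ∈ rookPlacements B (k + 1) := by
  obtain ⟨hqB, hqc, hqrow⟩ := mem_filter.mp hq
  have hqP := notMem_of_mem_rookPlacements_filter_ne hP hqc
  obtain ⟨hPB, rfl, hPr⟩ := mem_pairwiseSubsets.mp hP
  have hfree : ∀ p ∈ P, q.1 ≠ p.1 ∧ q.2 ≠ p.2 := fun p hp =>
    ⟨fun h => hqrow (mem_image.mpr ⟨p, hp, h.symm⟩),
      fun h => (mem_filter.mp (hPB hp)).2 (h.symm.trans hqc)⟩
  refine mem_pairwiseSubsets.mpr
    ⟨insert_subset hqB (hPB.trans (filter_subset _ _)), card_insert_of_notMem hqP, ?_⟩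
  simp only [mem_insert]
  rintro a (rfl | ha) b (rfl | hb) hab
  · exact absurd rfl hab
  · exact hfree b hb
  · exact ⟨(hfree a ha).1.symm, (hfree a ha).2.symm⟩
  · exact hPr a ha b hb hab

theorem insert_filter_ne_eq {P : Finset (α × β)} {q : α × β} (hP : P ∈ rookPlacements B k)
    (hq : q ∈ P) (hqc : q.2 = c) : insert q {p ∈ P | p.2 ≠ c} = P := by
  ext p
  simp only [mem_insert, mem_filter]
  constructor
  · rintro (rfl | ⟨hp, -⟩)
    exacts [hq, hp]
  · intro hp
    by_cases hpc : p.2 = c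
    · left
      by_contra hne
      exact ((mem_pairwiseSubsets.mp hP).2.2 p hp q hq hne).2 (hpc.trans hqc.symm)
    · exact Or.inr ⟨hp, hpc⟩

theorem filter_ne_mem_rookPlacements {P : Finset (α × β)} (hP : P ∈ rookPlacements B (k + 1))
    (hmeet : ¬∀ p ∈ P, p.2 ≠ c) : {p ∈ P | p.2 ≠ c} ∈ rookPlacements {p ∈ B | p.2 ≠ c} k := by
  obtain ⟨q, hqP, hqc⟩ : ∃ q ∈ P, q.2 = c := by simpa using hmeet
  have hcard := card_insert_of_notMem (a := q) (s := {p ∈ P | p.2 ≠ c}) (by simp [hqc])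
  obtain ⟨hPB, hPk, hPr⟩ := mem_pairwiseSubsets.mp hP
  rw [insert_filter_ne_eq hP hqP hqc] at hcard
  refine mem_pairwiseSubsets.mpr ⟨filter_subset_filter _ hPB, by omega, fun a ha b hb => ?_⟩
  exact hPr a (mem_filter.mp ha).1 b (mem_filter.mp hb).1

theorem filter_rookPlacements_meeting_eq_image {P' : Finset (α × β)}
    (hP' : P' ∈ rookPlacements {p ∈ B | p.2 ≠ c} k) :
    {P ∈ rookPlacements B (k + 1) | (¬∀ p ∈ P, p.2 ≠ c) ∧ P.filter (·.2 ≠ c) = P'} =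
      (freeCells B c P').image (insert · P') := by
  ext P
  rw [mem_filter, mem_image]
  constructor
  · rintro ⟨hP, hmeet, rfl⟩
    obtain ⟨q, hqP, hqc⟩ : ∃ q ∈ P, q.2 = c := by simpa using hmeet
    refine ⟨q, mem_filter.mpr ⟨(mem_pairwiseSubsets.mp hP).1 hqP, hqc, ?_⟩,
      insert_filter_ne_eq hP hqP hqc⟩
    simp only [mem_image, mem_filter]
    rintro ⟨p, ⟨hpP, hpc⟩, hpq⟩
    exact ((mem_pairwiseSubsets.mp hP).2.2 p hpP q hqP (by rintro rfl; exact hpc hqc)).1 hpq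
  · rintro ⟨q, hq, rfl⟩
    have hqc := (mem_filter.mp hq).2.1
    refine ⟨insert_mem_rookPlacements hP' hq, fun h => h q (mem_insert_self q P') hqc, ?_⟩
    rw [filter_insert, if_neg (not_not.mpr hqc)]
    exact filter_true_of_mem fun p hp => (mem_filter.mp ((mem_pairwiseSubsets.mp hP').1 hp)).2

/-- Rook placements on `B` either avoid column `c`, or put one rook on a cell of column `c`
whose row is free; since column `c` meets every row of `B`, a placement of `k` rooks off
column `c` leaves exactly `#column - k` such cells. -/
theorem rookNumber_succ (hcol : ∀ p ∈ B, (p.1, c) ∈ B) (k : ℕ) :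
    (rookNumber B (k + 1) : ℤ) = rookNumber {p ∈ B | p.2 ≠ c} (k + 1) +
      (#{p ∈ B | p.2 = c} - k) * rookNumber {p ∈ B | p.2 ≠ c} k := by
  have hmaps : ∀ P ∈ {P ∈ rookPlacements B (k + 1) | ¬∀ p ∈ P, p.2 ≠ c},
      {p ∈ P | p.2 ≠ c} ∈ rookPlacements {p ∈ B | p.2 ≠ c} k :=
    fun P hP => filter_ne_mem_rookPlacements (mem_filter.mp hP).1 (mem_filter.mp hP).2
  have hfiber : ∀ P' ∈ rookPlacements {p ∈ B | p.2 ≠ c} k,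
      (#{P ∈ {P ∈ rookPlacements B (k + 1) | ¬∀ p ∈ P, p.2 ≠ c} | P.filter (·.2 ≠ c) = P'} : ℤ) =
        #{p ∈ B | p.2 = c} - k := by
    intro P' hP'
    rw [filter_filter, filter_rookPlacements_meeting_eq_image hP', card_image_of_injOn,
      eq_sub_iff_add_eq, ← Nat.cast_add, card_freeCells_add hcol hP']
    intro a ha b _ hab
    exact (insert_inj (notMem_of_mem_rookPlacements_filter_ne hP' (mem_filter.mp ha).2.1)).mp hab
  rw [rookNumber, rookNumber, rookNumber,
    ← card_filter_add_card_filter_not (fun P => ∀ p ∈ P, p.2 ≠ c), filter_rookPlacements_avoiding,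
    card_eq_sum_card_fiberwise hmaps]
  push_cast
  rw [sum_congr rfl hfiber, sum_const, nsmul_eq_mul, mul_comm]

theorem rookNumber_eq_addColumn (hcol : ∀ p ∈ B, (p.1, c) ∈ B) :
    (fun k => (rookNumber B k : ℤ)) =
      addColumn #{p ∈ B | p.2 = c} fun k => (rookNumber {p ∈ B | p.2 ≠ c} k : ℤ) := by
  funext k
  rcases k with _ | k
  · simp [addColumn, rookNumber_zero]
  · exact rookNumber_succ hcol k

end Rooks

/-- The white squares in the coordinates `((i + j) / 2, (i - j) / 2)`, in which bishops move
along rows and columns. -/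
noncomputable def diamondBoard (m : ℕ) : Finset (ℤ × ℤ) :=
  {p ∈ Icc 1 (m : ℤ) ×ˢ Icc (-(m : ℤ)) m |
    1 + p.2 ≤ p.1 ∧ 1 - p.2 ≤ p.1 ∧ p.1 + p.2 ≤ m ∧ p.1 - p.2 ≤ m}

theorem mem_diamondBoard {m : ℕ} {p : ℤ × ℤ} :
    p ∈ diamondBoard m ↔ 1 + p.2 ≤ p.1 ∧ 1 - p.2 ≤ p.1 ∧ p.1 + p.2 ≤ m ∧ p.1 - p.2 ≤ m := by
  simp only [diamondBoard, mem_filter, mem_product, mem_Icc]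
  omega

theorem whiteCount_eq_rookNumber (m k : ℕ) : whiteCount m k = rookNumber (diamondBoard m) k := by
  refine card_pairwiseSubsets_eq_of_bijOn
    (f := fun a : ℕ × ℕ => (((a.1 + a.2 : ℤ)) / 2, ((a.1 - a.2 : ℤ)) / 2))
    ⟨fun a ha => ?_, fun a ha b hb hab => ?_, fun q hq => ?_⟩ (fun a ha b hb _ => ?_) k
  all_goals simp only [coe_filter, Set.mem_ofPred_eq, mem_filter, mem_product, mem_Icc,
    Nat.even_iff, mem_coe, mem_diamondBoard, Prod.ext_iff] at *
  · omega
  · omega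
  · refine ⟨((q.1 + q.2).toNat, (q.1 - q.2).toNat), ?_, ?_⟩
    · simp only [Set.mem_ofPred_eq]
      omega
    · ext <;> dsimp only <;> omega
  · omega

theorem mk_zero_mem_diamondBoard {m : ℕ} {p : ℤ × ℤ} (hp : p ∈ diamondBoard m) :
    (p.1, 0) ∈ diamondBoard m := by
  rw [mem_diamondBoard] at hp ⊢
  omega

theorem card_diamondBoard_filter_snd_eq_zero (m : ℕ) : #{p ∈ diamondBoard m | p.2 = 0} = m := by
  have : {p ∈ diamondBoard m | p.2 = 0} = (Icc 1 (m : ℤ)).image (·, 0) := by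
    ext p
    simp only [mem_filter, mem_diamondBoard, mem_image, mem_Icc, Prod.ext_iff]
    constructor
    · intro hp
      exact ⟨p.1, by omega, rfl, hp.2.symm⟩
    · rintro ⟨u, hu, rfl, h⟩
      omega
  rw [this, card_image_of_injective _ fun a b h => (Prod.ext_iff.mp h).1, Int.card_Icc]
  omega

theorem mk_one_mem_diamondBoard_filter {m : ℕ} {p : ℤ × ℤ}
    (hp : p ∈ {p ∈ diamondBoard (m + 2) | p.2 ≠ 0}) :
    (p.1, 1) ∈ {p ∈ diamondBoard (m + 2) | p.2 ≠ 0} := by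
  simp only [mem_filter, mem_diamondBoard] at hp ⊢
  omega

theorem card_diamondBoard_filter_snd_eq_one (m : ℕ) :
    #{p ∈ {p ∈ diamondBoard (m + 2) | p.2 ≠ 0} | p.2 = 1} = m := by
  have : {p ∈ {p ∈ diamondBoard (m + 2) | p.2 ≠ 0} | p.2 = 1} =
      (Icc 2 (m + 1 : ℤ)).image (·, 1) := by
    ext p
    simp only [mem_filter, mem_diamondBoard, mem_image, mem_Icc, Prod.ext_iff]
    constructor
    · intro hp
      exact ⟨p.1, by omega, rfl, hp.2.symm⟩
    · rintro ⟨u, hu, rfl, h⟩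
      omega
  rw [this, card_image_of_injective _ fun a b h => (Prod.ext_iff.mp h).1, Int.card_Icc]
  omega

theorem rookNumber_diamondBoard_filter_ne_one (m k : ℕ) :
    rookNumber {p ∈ {p ∈ diamondBoard (m + 2) | p.2 ≠ 0} | p.2 ≠ 1} k =
      rookNumber (diamondBoard m) k := by
  refine card_pairwiseSubsets_eq_of_bijOn
    (f := fun p : ℤ × ℤ => (p.1 - 1, if 0 < p.2 then p.2 - 1 else p.2 + 1))
    ⟨fun p hp => ?_, fun p hp q hq hpq => ?_, fun q hq => ?_⟩ (fun p hp q hq _ => ?_) k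
  all_goals simp only [coe_filter, Set.mem_ofPred_eq, mem_filter, mem_coe, mem_diamondBoard,
    Prod.ext_iff] at *
  · split_ifs <;> omega
  · split_ifs at hpq <;> omega
  · refine ⟨(q.1 + 1, if 0 < q.2 then q.2 + 1 else q.2 - 1), ?_, ?_⟩
    · simp only [Set.mem_ofPred_eq]
      split_ifs <;> omega
    · refine Prod.ext (by dsimp only; omega) ?_
      dsimp only
      split_ifs <;> omega
  · split_ifs <;> omega

theorem rookNumber_diamondBoard_add_two (m : ℕ) :
    (fun k => (rookNumber (diamondBoard (m + 2)) k : ℤ)) =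
      addColumn (m + 2) (addColumn m fun k => rookNumber (diamondBoard m) k) := by
  rw [rookNumber_eq_addColumn fun p => mk_zero_mem_diamondBoard,
    card_diamondBoard_filter_snd_eq_zero,
    rookNumber_eq_addColumn fun p => mk_one_mem_diamondBoard_filter,
    card_diamondBoard_filter_snd_eq_one]
  simp only [rookNumber_diamondBoard_filter_ne_one]
  push_cast
  rfl

theorem rookNumber_diamondBoard :
    ∀ m : ℕ, (fun k => (rookNumber (diamondBoard m) k : ℤ)) =
      fun k : ℕ => whiteClosedForm m (m - k)
  | 0 => by
    funext k
    rcases k with _ | k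
    · decide
    · have : #(diamondBoard 0) = 0 := by decide
      rw [rookNumber_eq_zero_of_card_lt (by omega), whiteClosedForm_of_neg (by omega),
        Nat.cast_zero]
  | 1 => by
    funext k
    rcases k with _ | _ | k
    · decide
    · decide
    · have : #(diamondBoard 1) = 1 := by decide
      rw [rookNumber_eq_zero_of_card_lt (by omega), whiteClosedForm_of_neg (by omega),
        Nat.cast_zero]
  | m + 2 => by
    rw [rookNumber_diamondBoard_add_two, rookNumber_diamondBoard m,
      ← whiteClosedForm_add_two_eq_addColumn]

/-- Closed form for nonattacking bishop placements on the white squares. -/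
theorem white_bishop_closed_form (m k : ℕ) :
    whiteCount m k =
      ∑ j ∈ Finset.range (k + 1),
        Nat.choose ((m + 1) / 2) j * stirlingZ (m - j) ((m : ℤ) - k) := by
  apply Nat.cast_injective (R := ℤ)
  rw [whiteCount_eq_rookNumber, cast_sum_eq_whiteClosedForm]
  exact congrFun (rookNumber_diamondBoard m) k
end

section
/- For all integers m ≥ 0 and k ≥ 0, S(m, m−k) = ∑_{p=0}^{k} T(k+p, p) · C(m, k+p). -/
open Finset

/-- Associated Stirling number of the second kind `T(n,l)`:
`T(n,l) = l·T(n−1,l) + (n−1)·T(n−2,l−1)`, `T(0,l) = [l=0]`, `T(1,l) = 0`, `T(n,0) = [n=0]`. -/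
def astirling : ℕ → ℕ → ℕ
  | 0, 0 => 1
  | 0, _ + 1 => 0
  | 1, _ => 0
  | _ + 2, 0 => 0
  | n + 2, l + 1 => (l + 1) * astirling (n + 1) (l + 1) + (n + 1) * astirling n l


/-!
Both sides, as functions `s m k`, satisfy `s (m+1) (k+1) = (m - k) * s m k + s m (k+1)` with
`s m 0 = 1` and `s 0 (k+1) = 0`. For the left side this is the recurrence of `S`. For the right
side, Pascal's rule splits `C(m+1, k+1+p)`; in the part with `C(m, k+p)` the recurrence of `T`
and `(j+1) C(m, j+1) = (m-j) C(m, j)` turn the coefficient of `T(k+p,p) C(m,k+p)` into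
`p + (m - k - p) = m - k`.
-/

lemma stirling2_eq_zero_of_lt : ∀ {n l : ℕ}, n < l → stirling2 n l = 0
  | 0, _ + 1, _ => rfl
  | n + 1, l + 1, h => by
    rw [stirling2, stirling2_eq_zero_of_lt (by omega : n < l + 1),
      stirling2_eq_zero_of_lt (by omega : n < l), mul_zero]

lemma stirling2_self : ∀ n : ℕ, stirling2 n n = 1
  | 0 => rfl
  | n + 1 => by
    rw [stirling2, stirling2_eq_zero_of_lt (Nat.lt_succ_self n), stirling2_self n, mul_zero]

lemma stirlingZ_succ_add_one (n : ℕ) (l : ℤ) :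
    stirlingZ (n + 1) (l + 1) = (l + 1).toNat * stirlingZ n (l + 1) + stirlingZ n l := by
  obtain hl | rfl | hl := lt_trichotomy l (-1)
  · simp only [stirlingZ, if_neg (by omega : ¬0 ≤ l + 1), if_neg (by omega : ¬0 ≤ l), mul_zero]
  · simp [stirlingZ, stirling2]
  · lift l to ℕ using (by omega)
    simp only [stirlingZ, ← Nat.cast_succ, Nat.cast_nonneg, if_true, Int.toNat_natCast]
    rfl

lemma stirlingZ_natCast_sub_succ (m k : ℕ) :
    stirlingZ (m + 1) (((m + 1 : ℕ) : ℤ) - ((k + 1 : ℕ) : ℤ)) =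
      (m - k) * stirlingZ m ((m : ℤ) - k) + stirlingZ m ((m : ℤ) - ((k + 1 : ℕ) : ℤ)) := by
  have h : ((m + 1 : ℕ) : ℤ) - ((k + 1 : ℕ) : ℤ) = ((m : ℤ) - ((k + 1 : ℕ) : ℤ)) + 1 := by
    push_cast; ring
  rw [h, stirlingZ_succ_add_one, show (m : ℤ) - ((k + 1 : ℕ) : ℤ) + 1 = m - k by push_cast; ring,
    show ((m : ℤ) - k).toNat = m - k by omega]

lemma astirling_succ_zero (n : ℕ) : astirling (n + 1) 0 = 0 := by
  cases n <;> rfl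

lemma astirling_eq_zero_of_lt_two_mul : ∀ {n l : ℕ}, n < 2 * l → astirling n l = 0
  | 0, _ + 1, _ => rfl
  | 1, _ + 1, _ => rfl
  | n + 2, l + 1, h => by
    rw [astirling, astirling_eq_zero_of_lt_two_mul (by omega : n + 1 < 2 * (l + 1)),
      astirling_eq_zero_of_lt_two_mul (by omega : n < 2 * l), mul_zero, mul_zero, add_zero]

lemma add_sub_add_mul_choose (m k p : ℕ) :
    (p + (m - (k + p))) * m.choose (k + p) = (m - k) * m.choose (k + p) := by
  rcases le_or_gt (k + p) m with h | h
  · rw [show p + (m - (k + p)) = m - k by omega]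
  · rw [Nat.choose_eq_zero_of_lt h, mul_zero, mul_zero]

def assocSum (m k : ℕ) : ℕ :=
  ∑ p ∈ range (k + 1), astirling (k + p) p * m.choose (k + p)

lemma assocSum_zero_right (m : ℕ) : assocSum m 0 = 1 := by
  simp [assocSum, astirling]

lemma assocSum_zero_succ (k : ℕ) : assocSum 0 (k + 1) = 0 :=
  sum_eq_zero fun p _ => by rw [Nat.choose_eq_zero_of_lt (by omega), mul_zero]

lemma sum_astirling_succ_mul_choose (m k : ℕ) :
    ∑ p ∈ range (k + 2), astirling (k + 1 + p) p * m.choose (k + p) = (m - k) * assocSum m k := by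
  set f : ℕ → ℕ := fun p => astirling (k + p) p * m.choose (k + p) with hf
  set g : ℕ → ℕ := fun p => p * f p with hg
  have hterm (q : ℕ) : astirling (k + 1 + (q + 1)) (q + 1) * m.choose (k + (q + 1)) =
      g (q + 1) + (m - (k + q)) * f q := by
    rw [show k + 1 + (q + 1) = k + q + 2 by omega, astirling, show k + (q + 1) = k + q + 1 by omega]
    have hchoose : (k + q + 1) * astirling (k + q) q * m.choose (k + q + 1) =
        (m - (k + q)) * (astirling (k + q) q * m.choose (k + q)) := by
      rw [mul_right_comm, mul_comm (k + q + 1), Nat.choose_succ_right_eq]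
      ring
    rw [add_mul, hchoose, mul_assoc]
    rfl
  have hg_shift : ∑ q ∈ range (k + 1), g (q + 1) = ∑ p ∈ range (k + 1), g p := by
    have hg_zero : g 0 = 0 := zero_mul _
    have hg_succ : g (k + 1) = 0 := by
      simp only [hg, hf, astirling_eq_zero_of_lt_two_mul (by omega : k + (k + 1) < 2 * (k + 1)),
        zero_mul, mul_zero]
    have h := (sum_range_succ' g (k + 1)).symm.trans (sum_range_succ g (k + 1))
    rwa [hg_zero, hg_succ, add_zero, add_zero] at h
  calc ∑ p ∈ range (k + 2), astirling (k + 1 + p) p * m.choose (k + p)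
      = ∑ q ∈ range (k + 1), astirling (k + 1 + (q + 1)) (q + 1) * m.choose (k + (q + 1)) := by
        rw [sum_range_succ', astirling_succ_zero, zero_mul, add_zero]
    _ = ∑ q ∈ range (k + 1), (g (q + 1) + (m - (k + q)) * f q) := sum_congr rfl fun q _ => hterm q
    _ = ∑ p ∈ range (k + 1), (p + (m - (k + p))) * f p := by
        rw [sum_add_distrib, hg_shift, ← sum_add_distrib]
        simp only [hg, add_mul]
    _ = (m - k) * assocSum m k := by
        rw [assocSum, mul_sum]
        refine sum_congr rfl fun p _ => ?_
        simp only [hf, mul_left_comm _ (astirling _ _), add_sub_add_mul_choose]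

lemma assocSum_succ_succ (m k : ℕ) :
    assocSum (m + 1) (k + 1) = (m - k) * assocSum m k + assocSum m (k + 1) := by
  rw [← sum_astirling_succ_mul_choose, assocSum, assocSum, ← sum_add_distrib]
  refine sum_congr rfl fun p _ => ?_
  rw [show k + 1 + p = k + p + 1 by omega, Nat.choose_succ_succ', mul_add]

/-- `S(m, m−k) = ∑_{p=0}^{k} T(k+p, p) · C(m, k+p)`. -/
theorem stirling_eq_sum_associated (m k : ℕ) :
    stirlingZ m ((m : ℤ) - k) =
      ∑ p ∈ Finset.range (k + 1), astirling (k + p) p * Nat.choose m (k + p) := by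
  change stirlingZ m ((m : ℤ) - k) = assocSum m k
  induction m generalizing k with
  | zero =>
    cases k with
    | zero => rfl
    | succ k => rw [assocSum_zero_succ, stirlingZ, if_neg (by omega)]
  | succ m ih =>
    cases k with
    | zero => rw [assocSum_zero_right, stirlingZ, if_pos (by omega)]; simp [stirling2_self]
    | succ k => rw [stirlingZ_natCast_sub_succ, ih, ih, assocSum_succ_succ]
end
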